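/- arXiv:1008.2673 — 2 statements merged into one kernel-verified Lean document; each statement's English description precedes it below -/
import Mathlib

section
/- Let A ∈ ℂ^{N×N} with spectral radius ρ(A) < 1 and let V ∈ ℂ^N. Define φ(z) = A z/(⟨z, (Aᴴ − I)V⟩ + 1). If ⟨z, (Aᴴ − I)V⟩ + 1 ≠ 0 for every z ∈ B_N and φ maps B_N into B_N, then |V| ≤ 1. Moreover the n-th iterate of φ is given by φ_n(z) = Aⁿ z/(⟨z, ((Aⁿ)ᴴ − I)V⟩ + 1) for every n ∈ ℕ. -/
/-!
The maps `linFrac M V : z ↦ M z / (⟨z, (Mᴴ - I) V⟩ + 1)` compose like their matrices,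
`linFrac M V ∘ linFrac K V = linFrac (M * K) V`, with multiplying denominators. Hence the
iterates of `φ = linFrac A V` are the maps `linFrac (Aⁿ) V`, and their denominators
`⟨z, ((Aⁿ)ᴴ - I) V⟩ + 1` do not vanish on the ball. A hyperplane `⟨z, u⟩ + 1 = 0` missing the
ball has `|u| ≤ 1`, so `|((Aⁿ)ᴴ - I) V| ≤ 1` for all `n`. Since `ρ(A) < 1`, Gelfand's formula
gives `Aⁿ → 0`, and in the limit `|V| ≤ 1`.
-/

open Matrix Set Complex

noncomputable section

/-- The Hermitian inner product `⟨x, y⟩ = ∑ j, x j * conj (y j)` on `ℂ^n`. -/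
def herm {n : Type*} [Fintype n] (x y : n → ℂ) : ℂ :=
  ∑ j, x j * (starRingEnd ℂ) (y j)

/-- The squared Euclidean norm on `ℂ^n`. -/
def enormSq {n : Type*} [Fintype n] (x : n → ℂ) : ℝ :=
  ∑ j, ‖x j‖ ^ 2

open Filter
open scoped Topology ENNReal NNReal

section LinearFractional

variable {n : Type*} [Fintype n]

lemma herm_smul_left (a : ℂ) (x y : n → ℂ) : herm (a • x) y = a * herm x y := by
  simp [herm, Finset.mul_sum, mul_assoc]

lemma herm_sub_right (x y y' : n → ℂ) : herm x (y - y') = herm x y - herm x y' := by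
  simp [herm, mul_sub, Finset.sum_sub_distrib]

lemma herm_mulVec_left (M : Matrix n n ℂ) (x y : n → ℂ) :
    herm (M *ᵥ x) y = herm x (Mᴴ *ᵥ y) := by
  simp only [herm, mulVec, dotProduct, conjTranspose_apply, map_sum, map_mul,
    Finset.sum_mul, Finset.mul_sum, star_def, conj_conj]
  rw [Finset.sum_comm]
  exact Finset.sum_congr rfl fun _ _ => Finset.sum_congr rfl fun _ _ => by ring

lemma herm_self (x : n → ℂ) : herm x x = enormSq x := by
  simp [herm, enormSq, mul_conj']

lemma enormSq_smul (a : ℂ) (x : n → ℂ) : enormSq (a • x) = ‖a‖ ^ 2 * enormSq x := by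
  simp [enormSq, Finset.mul_sum, mul_pow]

lemma enormSq_neg (x : n → ℂ) : enormSq (-x) = enormSq x := by
  simp [enormSq]

lemma continuous_enormSq : Continuous (enormSq : (n → ℂ) → ℝ) :=
  continuous_finsetSum _ fun j _ => ((continuous_apply j).norm).pow 2

lemma enormSq_le_one_of_herm_add_one_ne_zero {u : n → ℂ}
    (h : ∀ z, enormSq z < 1 → herm z u + 1 ≠ 0) : enormSq u ≤ 1 := by
  by_contra! hu
  have hpos : 0 < enormSq u := one_pos.trans hu
  -- `z = -u / |u|²` lies in the ball and on the hyperplane `⟨z, u⟩ + 1 = 0`.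
  set z : n → ℂ := ((-(enormSq u)⁻¹ : ℝ) : ℂ) • u
  have hz : enormSq z < 1 := by
    rw [enormSq_smul, norm_real, norm_neg, norm_inv, Real.norm_of_nonneg hpos.le, inv_pow,
      sq, mul_inv, mul_assoc, inv_mul_cancel₀ hpos.ne', mul_one]
    exact inv_lt_one_of_one_lt₀ hu
  apply h z hz
  rw [herm_smul_left, herm_self]
  push_cast
  field_simp [ofReal_ne_zero.2 hpos.ne']
  ring

variable [DecidableEq n]

def linFracDen (M : Matrix n n ℂ) (V z : n → ℂ) : ℂ :=
  herm z ((Mᴴ - 1) *ᵥ V) + 1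

def linFrac (M : Matrix n n ℂ) (V z : n → ℂ) : n → ℂ :=
  (linFracDen M V z)⁻¹ • M *ᵥ z

lemma linFracDen_one (V z : n → ℂ) : linFracDen 1 V z = 1 := by
  simp [linFracDen, herm]

lemma linFracDen_mul {M K : Matrix n n ℂ} {V z : n → ℂ} (hK : linFracDen K V z ≠ 0) :
    linFracDen (M * K) V z = linFracDen K V z * linFracDen M V (linFrac K V z) := by
  have hpull : herm (K *ᵥ z) ((Mᴴ - 1) *ᵥ V)
      = herm z (((M * K)ᴴ - 1) *ᵥ V) - herm z ((Kᴴ - 1) *ᵥ V) := by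
    rw [herm_mulVec_left, mulVec_mulVec, ← herm_sub_right, ← sub_mulVec, conjTranspose_mul,
      Matrix.mul_sub, Matrix.mul_one]
    congr 2
    abel
  simp only [linFracDen, linFrac] at hK ⊢
  rw [herm_smul_left, hpull]
  field_simp
  ring

lemma linFrac_linFrac {M K : Matrix n n ℂ} {V z : n → ℂ} (hK : linFracDen K V z ≠ 0) :
    linFrac M V (linFrac K V z) = linFrac (M * K) V z := by
  change _ = (linFracDen (M * K) V z)⁻¹ • (M * K) *ᵥ z
  rw [linFracDen_mul hK, mul_inv, mul_comm (linFracDen K V z)⁻¹, ← smul_smul, ← mulVec_mulVec,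
    ← mulVec_smul]
  rfl

lemma iterate_linFrac {A : Matrix n n ℂ} {V : n → ℂ} {S : Set (n → ℂ)}
    (hden : ∀ z ∈ S, linFracDen A V z ≠ 0) (hmaps : MapsTo (linFrac A V) S S) (k : ℕ)
    {z : n → ℂ} (hz : z ∈ S) :
    linFracDen (A ^ k) V z ≠ 0 ∧ (linFrac A V)^[k] z = linFrac (A ^ k) V z := by
  induction k with
  | zero => simp [linFracDen_one, linFrac]
  | succ k ih =>
    obtain ⟨hden_k, hiter_k⟩ := ih
    have hden_A : linFracDen A V (linFrac (A ^ k) V z) ≠ 0 :=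
      hden _ (hiter_k ▸ hmaps.iterate k hz)
    rw [pow_succ', linFracDen_mul hden_k, Function.iterate_succ_apply', hiter_k,
      linFrac_linFrac hden_k]
    exact ⟨mul_ne_zero hden_k hden_A, rfl⟩

end LinearFractional

theorem spectralRadius_lt_of_forall_nnnorm_lt {A : Type*} [NormedRing A] [NormedAlgebra ℂ A]
    [CompleteSpace A] {a : A} {r : ℝ≥0} (hr : 0 < r) (h : ∀ k ∈ spectrum ℂ a, ‖k‖₊ < r) :
    spectralRadius ℂ a < r := by
  rcases (spectrum ℂ a).eq_empty_or_nonempty with he | hne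
  · simpa [spectralRadius, he] using hr
  · exact spectrum.spectralRadius_lt_of_forall_lt_of_nonempty hne h

theorem tendsto_pow_atTop_nhds_zero_of_spectralRadius_lt_one {A : Type*} [NormedRing A]
    [NormedAlgebra ℂ A] [CompleteSpace A] {a : A} (h : spectralRadius ℂ a < 1) :
    Tendsto (a ^ ·) atTop (𝓝 0) := by
  obtain ⟨c, hρc, hc1⟩ := ENNReal.lt_iff_exists_nnreal_btwn.1 h
  have hroot : ∀ᶠ n : ℕ in atTop, (‖a ^ n‖₊ : ℝ≥0∞) ^ (1 / n : ℝ) < c :=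
    (spectrum.pow_nnnorm_pow_one_div_tendsto_nhds_spectralRadius a).eventually_lt_const hρc
  have hgeom : ∀ᶠ n : ℕ in atTop, ‖a ^ n‖ ≤ (c : ℝ) ^ n := by
    filter_upwards [hroot, eventually_gt_atTop 0] with n hn hn0
    have := ENNReal.rpow_le_rpow hn.le (Nat.cast_nonneg n : (0 : ℝ) ≤ n)
    rw [← ENNReal.rpow_mul, one_div_mul_cancel (Nat.cast_ne_zero.2 hn0.ne'), ENNReal.rpow_one,
      ENNReal.rpow_natCast] at this
    exact_mod_cast this
  refine squeeze_zero_norm' hgeom (tendsto_pow_atTop_nhds_zero_of_lt_one c.2 ?_)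
  exact_mod_cast hc1

theorem Matrix.tendsto_pow_atTop_nhds_zero {n : Type*} [Fintype n] [DecidableEq n]
    {A : Matrix n n ℂ} (hA : ∀ μ ∈ spectrum ℂ A, ‖μ‖ < 1) :
    Tendsto (A ^ ·) atTop (𝓝 0) := by
  open scoped Matrix.Norms.L2Operator in
  exact tendsto_pow_atTop_nhds_zero_of_spectralRadius_lt_one <|
    spectralRadius_lt_of_forall_nnnorm_lt one_pos fun μ hμ => by exact_mod_cast hA μ hμ

/-- Let `ρ(A) < 1` and `φ(z) = A z / (⟨z, (Aᴴ - I)V⟩ + 1)` be a well-defined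
self-map of the unit ball. Then `|V| ≤ 1`, and for every `n` the `n`-th iterate of
`φ` is `φ_n(z) = Aⁿ z / (⟨z, ((Aⁿ)ᴴ - I)V⟩ + 1)`. -/
theorem stmt3 {N : ℕ} (A : Matrix (Fin N) (Fin N) ℂ)
    (hspec : ∀ μ ∈ spectrum ℂ A, ‖μ‖ < 1) (V : Fin N → ℂ)
    (φ : (Fin N → ℂ) → (Fin N → ℂ))
    (hφ : ∀ z, φ z = (herm z ((Aᴴ - 1).mulVec V) + 1)⁻¹ • A.mulVec z)
    (hden : ∀ z, enormSq z < 1 → herm z ((Aᴴ - 1).mulVec V) + 1 ≠ 0)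
    (hmaps : ∀ z, enormSq z < 1 → enormSq (φ z) < 1) :
    enormSq V ≤ 1 ∧
    ∀ (n : ℕ) (z : Fin N → ℂ), enormSq z < 1 →
      φ^[n] z = (herm z (((A ^ n)ᴴ - 1).mulVec V) + 1)⁻¹ • (A ^ n).mulVec z := by
  obtain rfl : φ = linFrac A V := funext hφ
  have hiter := iterate_linFrac (S := {z | enormSq z < 1}) hden hmaps
  refine ⟨?_, fun n z hz => (hiter n hz).2⟩
  have hbound (n : ℕ) : enormSq (((A ^ n)ᴴ - 1) *ᵥ V) ≤ 1 :=
    enormSq_le_one_of_herm_add_one_ne_zero fun z hz => (hiter n hz).1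
  have hlim : Tendsto (fun n => enormSq (((A ^ n)ᴴ - 1) *ᵥ V)) atTop (𝓝 (enormSq V)) := by
    have hcont : Continuous fun M : Matrix (Fin N) (Fin N) ℂ => enormSq ((Mᴴ - 1) *ᵥ V) :=
      continuous_enormSq.comp
        ((continuous_id.matrix_conjTranspose.sub continuous_const).matrix_mulVec continuous_const)
    simpa only [Function.comp_def, conjTranspose_zero, zero_sub, neg_mulVec, one_mulVec,
      enormSq_neg] using
      (hcont.tendsto 0).comp (Matrix.tendsto_pow_atTop_nhds_zero hspec)
  exact le_of_tendsto' hlim hbound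
end
end

section
/- Let N = 1 + p + q + r and write points of ℂ^N as (z, u, v, w) ∈ ℂ × ℂ^p × ℂ^q × ℂ^r, so that ℍ^N = {(z,u,v,w) : Im z > |u|² + |v|² + |w|²}. Let λ > 1 be real, a = (a₁,…,a_r) ∈ ℂ^r, b ∈ ℂ, let D be a q×q diagonal matrix whose diagonal entries have modulus 1 and are different from 1, and let A = diag(λ₁, …, λ_r) with λ_j = exp(−u_j + i v_j), u_j > 0, v_j ∈ [0, 2π). Assume ψ(z,u,v,w) = (λz + 2i⟨w, a⟩ + b, √λ·u, √λ·Dv, √λ·Aw) is a self-map of ℍ^N. If Im(b) ≥ Σ_{j=1}^{r} ((λ − 1)/(2 u_j ln λ)) · (((ln λ)/2 + u_j)² + v_j²)/|λ − √λ·λ_j|² · |a_j|², then ψ can be embedded into a semigroup of holomorphic self-maps of ℍ^N. -/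
open Matrix Set Complex Filter

noncomputable section

/-- `(φ t)_{t ≥ 0}` is a (continuous) semigroup of holomorphic self-maps of `U`. -/
def IsHolSemigroupOn {E : Type*} [NormedAddCommGroup E] [NormedSpace ℂ E]
    (U : Set E) (φ : ℝ → E → E) : Prop :=
  (∀ t : ℝ, 0 ≤ t → MapsTo (φ t) U U) ∧
  (∀ t : ℝ, 0 ≤ t → DifferentiableOn ℂ (φ t) U) ∧
  (∀ z ∈ U, φ 0 z = z) ∧
  (∀ s : ℝ, 0 ≤ s → ∀ t : ℝ, 0 ≤ t → ∀ z ∈ U, φ (s + t) z = φ s (φ t z)) ∧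
  (∀ K : Set E, K ⊆ U → IsCompact K →
    TendstoUniformlyOn (fun t => φ t) id (nhdsWithin 0 (Ioi 0)) K)

/-- `ℂ^N = ℂ × ℂ^p × ℂ^q × ℂ^r`. -/
abbrev E4 (p q r : ℕ) : Type := ℂ × (Fin p → ℂ) × (Fin q → ℂ) × (Fin r → ℂ)

/-- The Siegel half-plane `ℍ^N = {(z,u,v,w) : Im z > |u|² + |v|² + |w|²}`. -/
def Siegel4 (p q r : ℕ) : Set (E4 p q r) :=
  {x | enormSq x.2.1 + enormSq x.2.2.1 + enormSq x.2.2.2 < x.1.im}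

open scoped Real Topology ComplexConjugate

/-! The semigroup is written down explicitly. With `L = log λ` it is the flow
`φ_t(z,u,v,w) = (e^{tL} z + ∑_j κ_j (e^{tL} - e^{tβ_j}) w_j + c (e^{tL} - 1), e^{tL/2} u,
e^{tL/2} e^{itθ} v, e^{tβ} w)`, where `e^{β_j} = √λ λ_j`, `e^{iθ_j}` are the entries of `D`, and
`κ_j`, `c` are forced by `φ_1 = ψ`. The semigroup law, holomorphy and joint continuity are
immediate; the point is that every `φ_t`, `t ≥ 0`, maps `ℍ^N` into itself. Coordinatewise this is a
quadratic inequality in `|w_j|`, and its discriminant condition is a bound on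
`|e^{tL} - e^{tβ_j}|²` that comes from `|e^{tγ} - 1| ≤ |γ| ∫₀ᵗ e^{s Re γ} ds` (`γ = L - β_j`) and
the Cauchy–Schwarz inequality for `∫₀ᵗ e^{As/2} e^{Bs/2} ds`. The constant terms these
coordinate inequalities require are, up to the factor `λ - 1`, the summands of the hypothesis on
`Im b`. -/

theorem integral_exp_mul_real {k : ℝ} (hk : k ≠ 0) (a b : ℝ) :
    ∫ s in a..b, rexp (k * s) = (rexp (k * b) - rexp (k * a)) / k := by
  rw [intervalIntegral.integral_comp_mul_left (fun s => rexp s) hk, integral_exp, smul_eq_mul,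
    inv_mul_eq_div]

theorem sq_integral_mul_le {f g : ℝ → ℝ} (hf : Continuous f) (hg : Continuous g) {a b : ℝ}
    (hab : a ≤ b) :
    (∫ s in a..b, f s * g s) ^ 2 ≤ (∫ s in a..b, f s ^ 2) * ∫ s in a..b, g s ^ 2 := by
  have hquad : ∀ x : ℝ, 0 ≤ (∫ s in a..b, f s ^ 2) * (x * x) + 2 * (∫ s in a..b, f s * g s) * x
      + ∫ s in a..b, g s ^ 2 := by
    intro x
    have hint : ∀ h : ℝ → ℝ, Continuous h → IntervalIntegrable h MeasureTheory.volume a b :=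
      fun h hh => hh.intervalIntegrable a b
    calc (0 : ℝ) ≤ ∫ s in a..b, (x * f s + g s) ^ 2 :=
          intervalIntegral.integral_nonneg hab fun s _ => sq_nonneg _
      _ = _ := by
        simp_rw [add_sq, mul_pow]
        rw [intervalIntegral.integral_add (hint _ (by fun_prop)) (hint _ (by fun_prop)),
          intervalIntegral.integral_add (hint _ (by fun_prop)) (hint _ (by fun_prop))]
        simp only [intervalIntegral.integral_const_mul, mul_assoc]
        ring
  have hdisc := discrim_le_zero hquad
  rw [discrim] at hdisc
  nlinarith

theorem sq_exp_mul_sub_one_div_le {A B t : ℝ} (hA : A ≠ 0) (hB : B ≠ 0) (hAB : A + B ≠ 0)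
    (ht : 0 ≤ t) :
    ((rexp ((A + B) / 2 * t) - 1) / ((A + B) / 2)) ^ 2 ≤
      (rexp (A * t) - 1) / A * ((rexp (B * t) - 1) / B) := by
  have hexp_half : ∀ k s : ℝ, rexp (k / 2 * s) ^ 2 = rexp (k * s) := fun k s => by
    rw [← Real.exp_nat_mul]; ring_nf
  have hcs := sq_integral_mul_le (f := fun s => rexp (A / 2 * s)) (g := fun s => rexp (B / 2 * s))
    (by fun_prop) (by fun_prop) ht
  simp only [← Real.exp_add, hexp_half, ← add_mul] at hcs
  rwa [integral_exp_mul_real (by simpa [← add_div] using hAB), integral_exp_mul_real hA,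
    integral_exp_mul_real hB, ← add_div, mul_zero, mul_zero, mul_zero, Real.exp_zero] at hcs

theorem norm_cexp_mul_sub_one_le {γ : ℂ} (hγ : γ.re ≠ 0) {t : ℝ} (ht : 0 ≤ t) :
    ‖cexp (t * γ) - 1‖ ≤ ‖γ‖ * ((rexp (γ.re * t) - 1) / γ.re) := by
  have hγ0 : γ ≠ 0 := fun h => hγ (by simp [h])
  have hint : cexp (t * γ) - 1 = γ * ∫ s in (0 : ℝ)..t, cexp (γ * s) := by
    rw [integral_exp_mul_complex hγ0, mul_div_cancel₀ _ hγ0]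
    simp [mul_comm]
  calc ‖cexp (t * γ) - 1‖ ≤ ‖γ‖ * ∫ s in (0 : ℝ)..t, ‖cexp (γ * s)‖ := by
        rw [hint, norm_mul]
        exact mul_le_mul_of_nonneg_left (intervalIntegral.norm_integral_le_integral_norm ht)
          (norm_nonneg _)
    _ = ‖γ‖ * ((rexp (γ.re * t) - 1) / γ.re) := by
        simp only [Complex.norm_exp, Complex.re_mul_ofReal]
        rw [integral_exp_mul_real hγ, mul_zero, Real.exp_zero]

theorem norm_cexp_sq (z : ℂ) : ‖cexp z‖ ^ 2 = rexp (2 * z.re) := by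
  rw [Complex.norm_exp, ← Real.exp_nat_mul]; norm_num

theorem norm_cexp_sub_cexp_sq_le {L : ℝ} (hL : 0 < L) {β : ℂ} (hβ : 2 * β.re < L) {t : ℝ}
    (ht : 0 ≤ t) :
    ‖cexp (t * L) - cexp (t * β)‖ ^ 2 ≤
      (rexp (L * t) - rexp (2 * β.re * t)) * (rexp (L * t) - 1) * ‖L - β‖ ^ 2
        / (L * (L - 2 * β.re)) := by
  set B := L - 2 * β.re with hB
  have hBpos : 0 < B := by linarith
  have hγre : ((L : ℂ) - β).re = (L + B) / 2 := by simp only [Complex.sub_re, Complex.ofReal_re, hB]; ring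
  have hfactor : cexp (t * L) - cexp (t * β) = cexp (t * β) * (cexp (t * (L - β)) - 1) := by
    rw [mul_sub, mul_one, ← Complex.exp_add]; ring_nf
  have hnorm_sq : ‖cexp (t * β)‖ ^ 2 = rexp (2 * β.re * t) := by
    rw [norm_cexp_sq, Complex.re_ofReal_mul]; exact congrArg rexp (by ring)
  have hshift : rexp (2 * β.re * t) * (rexp (B * t) - 1) = rexp (L * t) - rexp (2 * β.re * t) := by
    rw [mul_sub, mul_one, ← Real.exp_add, hB]; ring_nf
  have hF := sq_exp_mul_sub_one_div_le hL.ne' hBpos.ne' (by linarith) ht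
  have hγ := norm_cexp_mul_sub_one_le (γ := L - β) (by rw [hγre]; linarith) ht
  rw [hγre] at hγ
  calc ‖cexp (t * L) - cexp (t * β)‖ ^ 2
      = rexp (2 * β.re * t) * ‖cexp (t * (L - β)) - 1‖ ^ 2 := by
        rw [hfactor, norm_mul, mul_pow, hnorm_sq]
    _ ≤ rexp (2 * β.re * t) * (‖(L : ℂ) - β‖ ^ 2 *
          ((rexp ((L + B) / 2 * t) - 1) / ((L + B) / 2)) ^ 2) := by
        gcongr
        rw [← mul_pow]
        exact pow_le_pow_left₀ (norm_nonneg _) hγ 2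
    _ ≤ rexp (2 * β.re * t) * (‖(L : ℂ) - β‖ ^ 2 *
          ((rexp (L * t) - 1) / L * ((rexp (B * t) - 1) / B))) := by
        gcongr
    _ = _ := by
        rw [← hshift]
        field_simp

theorem quadratic_nonneg_of_sq_le {a b c : ℝ} (ha : 0 ≤ a) (hc : 0 ≤ c) (h : b ^ 2 ≤ 4 * a * c)
    (x : ℝ) : 0 ≤ a * x ^ 2 - b * x + c := by
  rcases ha.eq_or_lt with rfl | ha
  · have hb : b = 0 := by nlinarith
    simpa [hb] using hc
  · nlinarith [sq_nonneg (2 * a * x - b)]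

theorem norm_cexp_mul_sq_le {L : ℝ} (hL : 0 < L) {β : ℂ} (hβ : 2 * β.re < L) (κ w : ℂ) {t : ℝ}
    (ht : 0 ≤ t) :
    ‖cexp (t * β) * w‖ ^ 2 ≤ rexp (L * t) * ‖w‖ ^ 2 + (κ * (cexp (t * L) - cexp (t * β)) * w).im
      + (rexp (L * t) - 1) * (‖L - β‖ ^ 2 * ‖κ‖ ^ 2 / (4 * L * (L - 2 * β.re))) := by
  set Δ := cexp (t * L) - cexp (t * β)
  have hnorm_sq : ‖cexp (t * β)‖ ^ 2 = rexp (2 * β.re * t) := by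
    rw [norm_cexp_sq, Complex.re_ofReal_mul]; exact congrArg rexp (by ring)
  have hTP : 0 ≤ rexp (L * t) - rexp (2 * β.re * t) :=
    sub_nonneg.2 (Real.exp_le_exp.2 (by nlinarith))
  have hT1 : 0 ≤ rexp (L * t) - 1 := sub_nonneg.2 (Real.one_le_exp (by positivity))
  have hK : 0 ≤ ‖L - β‖ ^ 2 * ‖κ‖ ^ 2 / (4 * L * (L - 2 * β.re)) := by
    have : 0 < L - 2 * β.re := by linarith
    positivity
  have him : -(‖κ‖ * ‖Δ‖ * ‖w‖) ≤ (κ * Δ * w).im := by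
    rw [← norm_mul, ← norm_mul]
    exact neg_le_of_abs_le (Complex.abs_im_le_norm _)
  have hdisc : (‖κ‖ * ‖Δ‖) ^ 2 ≤ 4 * (rexp (L * t) - rexp (2 * β.re * t)) *
      ((rexp (L * t) - 1) * (‖L - β‖ ^ 2 * ‖κ‖ ^ 2 / (4 * L * (L - 2 * β.re)))) := by
    have hΔ := norm_cexp_sub_cexp_sq_le hL hβ ht
    have : 0 < L - 2 * β.re := by linarith
    calc (‖κ‖ * ‖Δ‖) ^ 2 = ‖κ‖ ^ 2 * ‖Δ‖ ^ 2 := mul_pow _ _ _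
      _ ≤ ‖κ‖ ^ 2 * ((rexp (L * t) - rexp (2 * β.re * t)) * (rexp (L * t) - 1) * ‖L - β‖ ^ 2
            / (L * (L - 2 * β.re))) := by gcongr
      _ = _ := by field_simp
  have hquad := quadratic_nonneg_of_sq_le hTP (mul_nonneg hT1 hK) hdisc ‖w‖
  rw [norm_mul, mul_pow, hnorm_sq]
  nlinarith

theorem Continuous.tendstoUniformlyOn_of_isCompact {α β γ : Type*} [UniformSpace α]
    [WeaklyLocallyCompactSpace α] [UniformSpace β] [UniformSpace γ] {f : α → β → γ}
    (h : Continuous (Function.uncurry f)) (x : α) {K : Set β} (hK : IsCompact K) :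
    TendstoUniformlyOn f (f x) (𝓝 x) K := by
  have := isCompact_iff_compactSpace.mp hK
  rw [tendstoUniformlyOn_iff_restrict]
  exact Continuous.tendstoUniformly (fun a (k : K) => f a k)
    (h.comp (continuous_id.prodMap continuous_subtype_val)) x

theorem isHolSemigroupOn_of_continuous {E : Type*} [NormedAddCommGroup E] [NormedSpace ℂ E]
    {U : Set E} {φ : ℝ → E → E} (hmaps : ∀ t : ℝ, 0 ≤ t → MapsTo (φ t) U U)
    (hdiff : ∀ t : ℝ, 0 ≤ t → DifferentiableOn ℂ (φ t) U) (hzero : ∀ z ∈ U, φ 0 z = z)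
    (hadd : ∀ s : ℝ, 0 ≤ s → ∀ t : ℝ, 0 ≤ t → ∀ z ∈ U, φ (s + t) z = φ s (φ t z))
    (hcont : Continuous (Function.uncurry φ)) : IsHolSemigroupOn U φ := by
  refine ⟨hmaps, hdiff, hzero, hadd, fun K hKU hK u hu => ?_⟩
  have hunif := (hcont.tendstoUniformlyOn_of_isCompact 0 hK).congr_right
    fun z hz => hzero z (hKU hz)
  exact (hunif u hu).filter_mono nhdsWithin_le_nhds

def siegelFlow {p q r : ℕ} (L : ℝ) (θ : Fin q → ℝ) (β κ : Fin r → ℂ) (c : ℂ) (t : ℝ)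
    (x : E4 p q r) : E4 p q r :=
  (cexp (t * L) * x.1 + ∑ j, κ j * (cexp (t * L) - cexp (t * β j)) * x.2.2.2 j
      + c * (cexp (t * L) - 1),
    fun i => cexp (t * (L / 2)) * x.2.1 i,
    fun j => cexp (t * (L / 2 + θ j * I)) * x.2.2.1 j,
    fun j => cexp (t * β j) * x.2.2.2 j)

section siegelFlow

variable {p q r : ℕ} (L : ℝ) (θ : Fin q → ℝ) (β κ : Fin r → ℂ) (c : ℂ)

theorem siegelFlow_zero (x : E4 p q r) : siegelFlow L θ β κ c 0 x = x := by
  simp [siegelFlow]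

theorem siegelFlow_add (s t : ℝ) (x : E4 p q r) :
    siegelFlow L θ β κ c (s + t) x = siegelFlow L θ β κ c s (siegelFlow L θ β κ c t x) := by
  have hexp_add : ∀ γ : ℂ, cexp ((s + t : ℝ) * γ) = cexp (s * γ) * cexp (t * γ) := fun γ => by
    rw [← Complex.exp_add]; push_cast; ring_nf
  simp only [siegelFlow, hexp_add]
  refine Prod.ext ?_ (Prod.ext ?_ (Prod.ext ?_ ?_))
  · have hsum : ∑ j, κ j * (cexp (s * L) * cexp (t * L) - cexp (s * β j) * cexp (t * β j))
          * x.2.2.2 j = cexp (s * L) * ∑ j, κ j * (cexp (t * L) - cexp (t * β j)) * x.2.2.2 j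
          + ∑ j, κ j * (cexp (s * L) - cexp (s * β j)) * (cexp (t * β j) * x.2.2.2 j) := by
      rw [Finset.mul_sum, ← Finset.sum_add_distrib]
      exact Finset.sum_congr rfl fun j _ => by ring
    simp only [hsum]
    ring
  all_goals funext j; simp only; ring

theorem continuous_uncurry_siegelFlow :
    Continuous (Function.uncurry (siegelFlow (p := p) L θ β κ c)) := by
  unfold siegelFlow; fun_prop

theorem differentiable_siegelFlow (t : ℝ) :
    Differentiable ℂ (siegelFlow (p := p) L θ β κ c t) := by
  unfold siegelFlow; fun_prop

end siegelFlow

theorem enormSq_mul_of_norm_sq_eq {n : Type*} [Fintype n] {f x : n → ℂ} {T : ℝ}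
    (hf : ∀ j, ‖f j‖ ^ 2 = T) : enormSq (fun j => f j * x j) = T * enormSq x := by
  simp only [enormSq, norm_mul, mul_pow, hf, Finset.mul_sum]

theorem mapsTo_siegelFlow {p q r : ℕ} {L : ℝ} (hL : 0 < L) (θ : Fin q → ℝ) {β : Fin r → ℂ}
    (hβ : ∀ j, 2 * (β j).re < L) (κ : Fin r → ℂ) {c : ℂ}
    (hc : ∑ j, ‖L - β j‖ ^ 2 * ‖κ j‖ ^ 2 / (4 * L * (L - 2 * (β j).re)) ≤ c.im) {t : ℝ}
    (ht : 0 ≤ t) : MapsTo (siegelFlow (p := p) L θ β κ c t) (Siegel4 p q r) (Siegel4 p q r) := by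
  intro x hx
  set T := rexp (L * t)
  have hT : cexp (t * L) = T := by rw [Complex.ofReal_exp]; push_cast; ring_nf
  have hnorm : ∀ γ : ℂ, γ.re = L / 2 → ‖cexp (t * γ)‖ ^ 2 = T := fun γ hγ => by
    rw [norm_cexp_sq, Complex.re_ofReal_mul, hγ]
    exact congrArg rexp (by ring)
  have hu : enormSq (fun i => cexp (t * (L / 2)) * x.2.1 i) = T * enormSq x.2.1 :=
    enormSq_mul_of_norm_sq_eq fun _ => hnorm _ (by simp)
  have hv : enormSq (fun j => cexp (t * (L / 2 + θ j * I)) * x.2.2.1 j) = T * enormSq x.2.2.1 :=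
    enormSq_mul_of_norm_sq_eq fun _ => hnorm _ (by simp)
  have hw : enormSq (fun j => cexp (t * β j) * x.2.2.2 j) ≤ T * enormSq x.2.2.2
      + (∑ j, κ j * (cexp (t * L) - cexp (t * β j)) * x.2.2.2 j).im + (T - 1) * c.im := by
    have hT1 : 0 ≤ T - 1 := sub_nonneg.2 (Real.one_le_exp (by positivity))
    calc enormSq (fun j => cexp (t * β j) * x.2.2.2 j)
        ≤ ∑ j, (T * ‖x.2.2.2 j‖ ^ 2 + (κ j * (cexp (t * L) - cexp (t * β j)) * x.2.2.2 j).im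
          + (T - 1) * (‖L - β j‖ ^ 2 * ‖κ j‖ ^ 2 / (4 * L * (L - 2 * (β j).re)))) :=
          Finset.sum_le_sum fun j _ => norm_cexp_mul_sq_le hL (hβ j) (κ j) _ ht
      _ = T * enormSq x.2.2.2 + (∑ j, κ j * (cexp (t * L) - cexp (t * β j)) * x.2.2.2 j).im
          + (T - 1) * ∑ j, ‖L - β j‖ ^ 2 * ‖κ j‖ ^ 2 / (4 * L * (L - 2 * (β j).re)) := by
          simp only [Finset.sum_add_distrib, enormSq, Finset.mul_sum, Complex.im_sum]
      _ ≤ _ := by gcongr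
  have him : (siegelFlow L θ β κ c t x).1.im = T * x.1.im
      + (∑ j, κ j * (cexp (t * L) - cexp (t * β j)) * x.2.2.2 j).im + (T - 1) * c.im := by
    simp only [siegelFlow, Complex.add_im, hT]
    simp [Complex.mul_im, mul_comm]
  change enormSq _ + enormSq _ + enormSq _ < _
  rw [him]
  dsimp only [siegelFlow]
  rw [hu, hv]
  have : T * (enormSq x.2.1 + enormSq x.2.2.1 + enormSq x.2.2.2) < T * x.1.im :=
    mul_lt_mul_of_pos_left hx (Real.exp_pos _)
  linarith

theorem cexp_ofReal_div_two {L lam : ℝ} (hL : rexp L = lam) :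
    cexp (L / 2) = (Real.sqrt lam : ℂ) := by
  rw [← hL, ← Real.exp_half, Complex.ofReal_exp]; push_cast; rfl

theorem siegelFlow_one_eq {p q r : ℕ} {lam L : ℝ} (hL : rexp L = lam) {θ : Fin q → ℝ}
    {e : Fin q → ℂ} (he : ∀ j, cexp (θ j * I) = e j) {β : Fin r → ℂ} {d : Fin r → ℂ}
    (hβ : ∀ j, cexp (β j) = (Real.sqrt lam : ℂ) * d j) {κ a : Fin r → ℂ}
    (hκ : ∀ j, κ j * (lam - (Real.sqrt lam : ℂ) * d j) = 2 * I * conj (a j)) {b c : ℂ}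
    (hc : c * (lam - 1) = b) (x : E4 p q r) :
    siegelFlow L θ β κ c 1 x = ((lam : ℂ) * x.1 + 2 * I * herm x.2.2.2 a + b,
      (Real.sqrt lam : ℂ) • x.2.1,
      (Real.sqrt lam : ℂ) • (diagonal e).mulVec x.2.2.1,
      (Real.sqrt lam : ℂ) • (diagonal d).mulVec x.2.2.2) := by
  have hlam : cexp L = lam := by rw [← hL, Complex.ofReal_exp]
  have hsqrt := cexp_ofReal_div_two hL
  simp only [siegelFlow, Complex.ofReal_one, one_mul, hlam]
  refine Prod.ext ?_ (Prod.ext ?_ (Prod.ext ?_ ?_))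
  · have hsum : ∑ j, κ j * (lam - cexp (β j)) * x.2.2.2 j = 2 * I * herm x.2.2.2 a := by
      simp only [herm, Finset.mul_sum, hβ, hκ]
      exact Finset.sum_congr rfl fun j _ => by ring
    rw [hsum, hc]
  · funext i; simp [hsqrt]
  · funext j; simp [mulVec_diagonal, Complex.exp_add, hsqrt, he, mul_assoc]
  · funext j; simp only [hβ, Pi.smul_apply, mulVec_diagonal, smul_eq_mul]; ring

theorem exists_isHolSemigroupOn_siegel {p q r : ℕ} {lam : ℝ} (hlam : 1 < lam) {e : Fin q → ℂ}
    (he : ∀ j, ‖e j‖ = 1) {β d : Fin r → ℂ} (hβ : ∀ j, 2 * (β j).re < Real.log lam)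
    (hd : ∀ j, cexp (β j) = (Real.sqrt lam : ℂ) * d j) (a : Fin r → ℂ) {b : ℂ}
    (hb : ∑ j, ‖Real.log lam - β j‖ ^ 2 * ‖a j‖ ^ 2 / (Real.log lam *
      (Real.log lam - 2 * (β j).re) * ‖(lam : ℂ) - (Real.sqrt lam : ℂ) * d j‖ ^ 2)
        ≤ b.im / (lam - 1)) :
    ∃ φ : ℝ → E4 p q r → E4 p q r, IsHolSemigroupOn (Siegel4 p q r) φ ∧
      ∀ x, φ 1 x = ((lam : ℂ) * x.1 + 2 * I * herm x.2.2.2 a + b,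
        (Real.sqrt lam : ℂ) • x.2.1,
        (Real.sqrt lam : ℂ) • (diagonal e).mulVec x.2.2.1,
        (Real.sqrt lam : ℂ) • (diagonal d).mulVec x.2.2.2) := by
  set L := Real.log lam
  have hL : 0 < L := Real.log_pos hlam
  have hexpL : rexp L = lam := Real.exp_log (by linarith)
  have hden : ∀ j, (lam : ℂ) - (Real.sqrt lam : ℂ) * d j ≠ 0 := fun j h => by
    have hnorm := congrArg norm (sub_eq_zero.1 h)
    rw [← hd, Complex.norm_exp, Complex.norm_real, Real.norm_of_nonneg (by linarith),
      ← hexpL, Real.exp_eq_exp] at hnorm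
    linarith [hβ j]
  set κ : Fin r → ℂ := fun j => 2 * I * conj (a j) / (lam - (Real.sqrt lam : ℂ) * d j)
  have hlam1 : (lam : ℂ) - 1 ≠ 0 := sub_ne_zero.2 (by exact_mod_cast hlam.ne')
  have hc : ∑ j, ‖L - β j‖ ^ 2 * ‖κ j‖ ^ 2 / (4 * L * (L - 2 * (β j).re))
      ≤ (b / (lam - 1)).im := by
    have hκ : ∀ j, ‖κ j‖ ^ 2 = 4 * ‖a j‖ ^ 2 / ‖(lam : ℂ) - (Real.sqrt lam : ℂ) * d j‖ ^ 2 :=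
      fun j => by
        simp only [κ, norm_div, norm_mul, Complex.norm_I, RCLike.norm_conj, div_pow, mul_pow]
        norm_num
    rw [show (lam : ℂ) - 1 = ((lam - 1 : ℝ) : ℂ) by push_cast; rfl, Complex.div_ofReal_im]
    convert hb using 2 with j
    rw [hκ]
    field_simp
  refine ⟨siegelFlow L (fun j => arg (e j)) β κ (b / (lam - 1)),
    isHolSemigroupOn_of_continuous
      (fun t ht => mapsTo_siegelFlow hL _ hβ κ hc ht)
      (fun t _ => (differentiable_siegelFlow _ _ _ _ _ t).differentiableOn)
      (fun z _ => siegelFlow_zero _ _ _ _ _ z)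
      (fun s _ t _ z _ => siegelFlow_add _ _ _ _ _ s t z)
      (continuous_uncurry_siegelFlow _ _ _ _ _),
    siegelFlow_one_eq hexpL (fun j => by simpa [he j] using norm_mul_exp_arg_mul_I (e j))
      hd (fun j => div_mul_cancel₀ _ (hden j)) (div_mul_cancel₀ _ hlam1)⟩

theorem stmt15_general {p q r : ℕ} (lam : ℝ) (hlam : 1 < lam)
    (a : Fin r → ℂ) (b : ℂ)
    (e : Fin q → ℂ) (he : ∀ j, ‖e j‖ = 1)
    (uu vv : Fin r → ℝ) (huu : ∀ j, 0 < uu j)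
    (d : Fin r → ℂ)
    (hd : ∀ j, d j = Complex.exp (-(uu j : ℂ) + (vv j : ℂ) * Complex.I))
    (ψ : E4 p q r → E4 p q r)
    (hψ : ∀ x, ψ x = ((lam : ℂ) * x.1 + 2 * Complex.I * herm x.2.2.2 a + b,
      (Real.sqrt lam : ℂ) • x.2.1,
      (Real.sqrt lam : ℂ) • (Matrix.diagonal e).mulVec x.2.2.1,
      (Real.sqrt lam : ℂ) • (Matrix.diagonal d).mulVec x.2.2.2))
    (hb : b.im ≥ ∑ j : Fin r,
      ((lam - 1) / (2 * uu j * Real.log lam)) *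
        (((Real.log lam / 2 + uu j) ^ 2 + vv j ^ 2) /
          ‖(lam : ℂ) - (Real.sqrt lam : ℂ) * d j‖ ^ 2) * ‖a j‖ ^ 2) :
    ∃ φt : ℝ → E4 p q r → E4 p q r,
      IsHolSemigroupOn (Siegel4 p q r) φt ∧ ∀ z ∈ Siegel4 p q r, φt 1 z = ψ z := by
  set L := Real.log lam
  set β : Fin r → ℂ := fun j => L / 2 - uu j + vv j * I
  have hβre : ∀ j, (β j).re = L / 2 - uu j := fun j => by simp [β]
  have hβim : ∀ j, (β j).im = vv j := fun j => by simp [β]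
  have hβ : ∀ j, cexp (β j) = (Real.sqrt lam : ℂ) * d j := fun j => by
    rw [hd, ← cexp_ofReal_div_two (Real.exp_log (by linarith)), ← Complex.exp_add]
    exact congrArg cexp (by ring)
  have hsum : ∑ j, ‖L - β j‖ ^ 2 * ‖a j‖ ^ 2 / (L * (L - 2 * (β j).re) *
      ‖(lam : ℂ) - (Real.sqrt lam : ℂ) * d j‖ ^ 2) ≤ b.im / (lam - 1) := by
    have hlam1 : 0 < lam - 1 := by linarith
    refine le_of_eq_of_le ?_ (div_le_div_of_nonneg_right hb.le hlam1.le)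
    rw [Finset.sum_div]
    refine Finset.sum_congr rfl fun j _ => ?_
    have hu := (huu j).ne'
    have hL : L ≠ 0 := (Real.log_pos hlam).ne'
    rw [Complex.sq_norm, Complex.normSq_apply, Complex.sub_re, Complex.sub_im, Complex.ofReal_re,
      Complex.ofReal_im, hβre, hβim, show L - 2 * (L / 2 - uu j) = 2 * uu j by ring]
    field_simp
    ring
  obtain ⟨φ, hφ, hφ1⟩ := exists_isHolSemigroupOn_siegel hlam he
    (fun j => by rw [hβre]; linarith [huu j]) hβ a hsum
  exact ⟨φ, hφ, fun z _ => by rw [hφ1, hψ]⟩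

/-- Let `ψ(z,u,v,w) = (λz + 2i⟨w,a⟩ + b, √λ u, √λ Dv, √λ Aw)` be a hyperbolic
self-map of `ℍ^N` with `λ > 1`, `D` diagonal unimodular without the entry `1`,
and `A = diag(λ₁, …, λ_r)`, `λ_j = exp(-u_j + i v_j)`, `u_j > 0`, `v_j ∈ [0, 2π)`.
If `Im b ≥ ∑_j ((λ-1)/(2 u_j ln λ)) ((ln λ/2 + u_j)² + v_j²)/|λ - √λ λ_j|² |a_j|²`,
then `ψ` embeds into a semigroup of holomorphic self-maps of `ℍ^N`. -/
theorem stmt15 {p q r : ℕ} (lam : ℝ) (hlam : 1 < lam)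
    (a : Fin r → ℂ) (b : ℂ)
    (e : Fin q → ℂ) (he : ∀ j, ‖e j‖ = 1) (he1 : ∀ j, e j ≠ 1)
    (uu vv : Fin r → ℝ) (huu : ∀ j, 0 < uu j)
    (hvv : ∀ j, vv j ∈ Ico (0 : ℝ) (2 * Real.pi))
    (d : Fin r → ℂ)
    (hd : ∀ j, d j = Complex.exp (-(uu j : ℂ) + (vv j : ℂ) * Complex.I))
    (ψ : E4 p q r → E4 p q r)
    (hψ : ∀ x, ψ x = ((lam : ℂ) * x.1 + 2 * Complex.I * herm x.2.2.2 a + b,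
      (Real.sqrt lam : ℂ) • x.2.1,
      (Real.sqrt lam : ℂ) • (Matrix.diagonal e).mulVec x.2.2.1,
      (Real.sqrt lam : ℂ) • (Matrix.diagonal d).mulVec x.2.2.2))
    (hself : MapsTo ψ (Siegel4 p q r) (Siegel4 p q r))
    (hb : b.im ≥ ∑ j : Fin r,
      ((lam - 1) / (2 * uu j * Real.log lam)) *
        (((Real.log lam / 2 + uu j) ^ 2 + vv j ^ 2) /
          ‖(lam : ℂ) - (Real.sqrt lam : ℂ) * d j‖ ^ 2) * ‖a j‖ ^ 2) :
    ∃ φt : ℝ → E4 p q r → E4 p q r,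
      IsHolSemigroupOn (Siegel4 p q r) φt ∧ ∀ z ∈ Siegel4 p q r, φt 1 z = ψ z :=
  stmt15_general lam hlam a b e he uu vv huu d hd ψ hψ hb
end
end
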